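/- arXiv:2311.16643 — 6 statements merged into one kernel-verified Lean document; each statement's English description precedes it below -/
import Mathlib

section
/- Let L be a finite lattice, let (a,b) be a decoration site of L, and let u and v be two distinct upper covers of a. Then b = u ⊔ v and a = u ⊓ v. -/
/-- An element of a finite lattice is *doubly irreducible* if it has exactly one
upper cover and exactly one lower cover. -/
def DoublyIrreducible {α : Type*} [Lattice α] (x : α) : Prop :=
  (∃! u, x ⋖ u) ∧ (∃! l, l ⋖ x)

/-- A *decoration site* of a lattice is a pair `(a, b)` such that the set of upper
covers of `a` equals the set of lower covers of `b`, and `a` has at least two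
upper covers. -/
def DecorationSite {α : Type*} [Lattice α] (a b : α) : Prop :=
  {x | a ⋖ x} = {x | x ⋖ b} ∧ 2 ≤ {x | a ⋖ x}.ncard

/-- The doubly irreducible elements strictly between `a` and `b`. -/
def siteTrinkets {α : Type*} [Lattice α] (a b : α) : Set α :=
  {x | DoublyIrreducible x ∧ a < x ∧ x < b}

/-- A *trinket-removal set* of a lattice: for every decoration site `(a, b)` it
contains exactly `min d (k - 2)` doubly irreducible elements strictly between
`a` and `b` (where `d` is the number of doubly irreducible elements strictly
between `a` and `b`, and `k` is the number of upper covers of `a`), and it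
contains no other elements. -/
def TrinketRemovalSet {α : Type*} [Lattice α] (T : Set α) : Prop :=
  (∀ a b : α, DecorationSite a b →
      (T ∩ siteTrinkets a b).ncard =
        min (siteTrinkets a b).ncard ({x | a ⋖ x}.ncard - 2)) ∧
  ∀ t ∈ T, ∃ a b : α, DecorationSite a b ∧ t ∈ siteTrinkets a b

/-- A finite lattice is a *rack* if `min d (k - 2) = 0` for every decoration site. -/
def IsRack (α : Type*) [Lattice α] : Prop :=
  ∀ a b : α, DecorationSite a b →
    min (siteTrinkets a b).ncard ({x | a ⋖ x}.ncard - 2) = 0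

/-- A *knot* of a finite lattice is an element distinct from top and bottom that
is comparable with every element. -/
def IsKnot {α : Type*} [Lattice α] (x : α) : Prop :=
  (∃ y, x < y) ∧ (∃ y, y < x) ∧ ∀ y, x ≤ y ∨ y ≤ x

/-- Birkhoff's semimodularity condition: whenever distinct `x` and `y` both
cover a common element `a`, the join `x ⊔ y` covers both `x` and `y`. -/
def Semimodular (α : Type*) [Lattice α] : Prop :=
  ∀ a x y : α, x ≠ y → a ⋖ x → a ⋖ y → x ⋖ x ⊔ y ∧ y ⋖ x ⊔ y

/-- The modular law: for all `x ≤ z`, `x ⊔ (y ⊓ z) = (x ⊔ y) ⊓ z`. -/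
def ModularLaw (α : Type*) [Lattice α] : Prop :=
  ∀ x y z : α, x ≤ z → x ⊔ (y ⊓ z) = (x ⊔ y) ⊓ z

theorem DecorationSite.covBy_of_covBy {α : Type*} [Lattice α] {a b x : α}
    (hab : DecorationSite a b) (hx : a ⋖ x) : x ⋖ b :=
  hab.1.subset hx

theorem stmt_2_general {α : Type*} [Lattice α] {a b u v : α}
    (hab : DecorationSite a b) (hu : a ⋖ u) (hv : a ⋖ v) (huv : u ≠ v) :
    b = u ⊔ v ∧ a = u ⊓ v :=
  ⟨((hab.covBy_of_covBy hu).wcovBy.sup_eq (hab.covBy_of_covBy hv).wcovBy huv).symm,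
    (hu.wcovBy.inf_eq hv.wcovBy huv).symm⟩

/-- If `(a, b)` is a decoration site and `u`, `v` are two distinct upper covers
of `a`, then `b = u ⊔ v` and `a = u ⊓ v`. -/
theorem stmt_2 {α : Type*} [Lattice α] [Finite α] [Nonempty α] {a b u v : α}
    (hab : DecorationSite a b) (hu : a ⋖ u) (hv : a ⋖ v) (huv : u ≠ v) :
    b = u ⊔ v ∧ a = u ⊓ v :=
  stmt_2_general hab hu hv huv
end

section
/- Let L be a finite lattice, let (a,b) be a decoration site of L, and let t be a doubly irreducible element with a < t < b. Then t is neither the lower corner nor the upper corner of any decoration site of L, and if (a′,b′) is any decoration site of L with a′ < t < b′, then a′ = a and b′ = b. In particular, a doubly irreducible element lies strictly between the corners of at most one decoration site. -/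
/-!
Every element strictly between the corners of a decoration site covers the lower corner and is
covered by the upper one. A doubly irreducible `t` inside a site therefore recovers the site as
its unique lower and upper cover, and having a single upper (lower) cover it cannot be the lower
(upper) corner of a site, which needs at least two.
-/

namespace DecorationSite

variable {α : Type*} [Lattice α] {a b t : α}

theorem covBy_iff (h : DecorationSite a b) (x : α) : a ⋖ x ↔ x ⋖ b :=
  Set.ext_iff.1 h.1 x

/-- An upper cover `x ≤ t` of `a` is covered by `b`, which leaves no room for `x < t < b`. -/
theorem covBy_of_lt_of_lt [IsStronglyAtomic α] (h : DecorationSite a b) (hat : a < t)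
    (htb : t < b) : a ⋖ t ∧ t ⋖ b := by
  obtain ⟨x, hax, hxt⟩ := exists_covBy_le_of_lt hat
  have hxb : x ⋖ b := (h.covBy_iff x).1 hax
  obtain rfl : x = t := hxt.eq_of_not_lt fun hxt' => hxb.2 hxt' htb
  exact ⟨hax, hxb⟩

end DecorationSite

namespace DoublyIrreducible

variable {α : Type*} [Lattice α] {t : α}

theorem ncard_upperCovers (ht : DoublyIrreducible t) : {x | t ⋖ x}.ncard = 1 := by
  obtain ⟨u, hu, huu⟩ := ht.1
  exact Set.ncard_eq_one.2 ⟨u, Set.eq_singleton_iff_unique_mem.2 ⟨hu, huu⟩⟩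

theorem ncard_lowerCovers (ht : DoublyIrreducible t) : {x | x ⋖ t}.ncard = 1 := by
  obtain ⟨l, hl, hll⟩ := ht.2
  exact Set.ncard_eq_one.2 ⟨l, Set.eq_singleton_iff_unique_mem.2 ⟨hl, hll⟩⟩

theorem not_decorationSite_left (ht : DoublyIrreducible t) (c : α) :
    ¬ DecorationSite t c := fun hc => by
  have := hc.2
  rw [ht.ncard_upperCovers] at this
  omega

theorem not_decorationSite_right (ht : DoublyIrreducible t) (c : α) :
    ¬ DecorationSite c t := fun hc => by
  have := hc.2
  rw [hc.1, ht.ncard_lowerCovers] at this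
  omega

end DoublyIrreducible

theorem stmt_4_general {α : Type*} [Lattice α] [Finite α] {a b t : α}
    (hab : DecorationSite a b) (ht : DoublyIrreducible t) (h1 : a < t) (h2 : t < b) :
    (∀ c : α, ¬ DecorationSite t c) ∧
    (∀ c : α, ¬ DecorationSite c t) ∧
    (∀ a' b' : α, DecorationSite a' b' → a' < t → t < b' → a' = a ∧ b' = b) := by
  refine ⟨ht.not_decorationSite_left, ht.not_decorationSite_right,
    fun a' b' hab' h1' h2' => ?_⟩
  obtain ⟨hat, htb⟩ := hab.covBy_of_lt_of_lt h1 h2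
  obtain ⟨hat', htb'⟩ := hab'.covBy_of_lt_of_lt h1' h2'
  exact ⟨ht.2.unique hat' hat, ht.1.unique htb' htb⟩

/-- A doubly irreducible element strictly between the corners of a decoration
site is neither the lower nor the upper corner of any decoration site, and it
lies strictly between the corners of at most one decoration site. -/
theorem stmt_4 {α : Type*} [Lattice α] [Finite α] [Nonempty α] {a b t : α}
    (hab : DecorationSite a b) (ht : DoublyIrreducible t) (h1 : a < t) (h2 : t < b) :
    (∀ c : α, ¬ DecorationSite t c) ∧
    (∀ c : α, ¬ DecorationSite c t) ∧
    (∀ a' b' : α, DecorationSite a' b' → a' < t → t < b' → a' = a ∧ b' = b) :=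
  stmt_4_general hab ht h1 h2
end

section
/- Let L be a finite lattice, let T be a trinket-removal set of L, and let R be the induced lattice on L \ T. Then L and R have the same decoration sites: for all a, b ∈ L \ T, the pair (a,b) is a decoration site of R if and only if (a,b) is a decoration site of L; moreover both corners of every decoration site of L lie in L \ T. -/
/-!
A removed element `t` is doubly irreducible and lies strictly inside a decoration site `(a, b)`
of `L`; since the interval `[a, b]` has length two, `a` and `b` are its only lower and upper
covers. Corners of sites have at least two covers, so they are never removed, and since at most
`k - 2` of the `k` upper covers of a lower corner are removed, at least two of them survive.
Hence no covering pair of `R` skips a removed element, i.e. covers in `R` are covers in `L`,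
which carries every site of `L` over to `R`. Conversely, if `(a, b)` is a site of `R` and a
removed `t` covers `a`, then the site of `L` around `t` is a site of `R` with lower corner `a`,
and a site is determined by either of its corners, so `t` is covered by `b`; dually.
-/

section DecorationSite

variable {α : Type*} [Lattice α] {a b : α}

theorem DecorationSite.covBy_iff_s5 (h : DecorationSite a b) {c : α} : a ⋖ c ↔ c ⋖ b :=
  Set.ext_iff.mp h.1 c

theorem DecorationSite.exists_covBy_ne (h : DecorationSite a b) :
    ∃ c₀ c₁, a ⋖ c₀ ∧ a ⋖ c₁ ∧ c₀ ≠ c₁ := by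
  obtain ⟨c₀, hc₀, c₁, hc₁, hne⟩ :=
    (Set.one_lt_ncard (Set.finite_of_ncard_pos (by linarith [h.2]))).mp h.2
  exact ⟨c₀, c₁, hc₀, hc₁, hne⟩

theorem DecorationSite.right_unique {b' : α} (h : DecorationSite a b) (h' : DecorationSite a b') :
    b = b' := by
  obtain ⟨c₀, c₁, hc₀, hc₁, hne⟩ := h.exists_covBy_ne
  rw [← WCovBy.sup_eq (h.covBy_iff_s5.mp hc₀).wcovBy (h.covBy_iff_s5.mp hc₁).wcovBy hne,
    WCovBy.sup_eq (h'.covBy_iff_s5.mp hc₀).wcovBy (h'.covBy_iff_s5.mp hc₁).wcovBy hne]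

theorem DecorationSite.left_unique {a' : α} (h : DecorationSite a b) (h' : DecorationSite a' b) :
    a = a' := by
  obtain ⟨c₀, c₁, hc₀, hc₁, hne⟩ := h.exists_covBy_ne
  rw [← WCovBy.inf_eq hc₀.wcovBy hc₁.wcovBy hne,
    WCovBy.inf_eq (h'.covBy_iff_s5.mpr (h.covBy_iff_s5.mp hc₀)).wcovBy
      (h'.covBy_iff_s5.mpr (h.covBy_iff_s5.mp hc₁)).wcovBy hne]

theorem DecorationSite.not_doublyIrreducible_left (h : DecorationSite a b) :
    ¬ DoublyIrreducible a := fun ha => by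
  obtain ⟨c₀, c₁, hc₀, hc₁, hne⟩ := h.exists_covBy_ne
  exact hne (ha.1.unique hc₀ hc₁)

theorem DecorationSite.not_doublyIrreducible_right (h : DecorationSite a b) :
    ¬ DoublyIrreducible b := fun hb => by
  obtain ⟨c₀, c₁, hc₀, hc₁, hne⟩ := h.exists_covBy_ne
  exact hne (hb.2.unique (h.covBy_iff_s5.mp hc₀) (h.covBy_iff_s5.mp hc₁))

theorem DecorationSite.covBy_of_lt_of_lt_s5 [IsStronglyAtomic α] (h : DecorationSite a b) {x : α}
    (hax : a < x) (hxb : x < b) : a ⋖ x ∧ x ⋖ b := by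
  obtain ⟨c, hac, hcx⟩ := exists_covBy_le_of_lt hax
  obtain rfl : c = x := hcx.eq_of_not_lt fun hcx' => (h.covBy_iff_s5.mp hac).2 hcx' hxb
  exact ⟨hac, h.covBy_iff_s5.mp hac⟩

end DecorationSite

namespace TrinketRemovalSet

variable {α : Type*} [Lattice α] {T : Set α} (hT : TrinketRemovalSet T)
include hT

theorem exists_decorationSite_of_mem [IsStronglyAtomic α] {t : α} (ht : t ∈ T) :
    ∃ a b, DecorationSite a b ∧ (∀ x, x ⋖ t ↔ x = a) ∧ (∀ x, t ⋖ x ↔ x = b) := by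
  obtain ⟨a, b, h, ht, hat, htb⟩ := hT.2 t ht
  obtain ⟨hat, htb⟩ := h.covBy_of_lt_of_lt_s5 hat htb
  exact ⟨a, b, h, fun x => ⟨fun hx => ht.2.unique hx hat, (· ▸ hat)⟩,
    fun x => ⟨fun hx => ht.1.unique hx htb, (· ▸ htb)⟩⟩

theorem doublyIrreducible_of_mem {t : α} (ht : t ∈ T) : DoublyIrreducible t := by
  obtain ⟨_, _, _, hdi, _⟩ := hT.2 t ht
  exact hdi

theorem left_notMem {a b : α} (h : DecorationSite a b) : a ∉ T :=
  fun ha => h.not_doublyIrreducible_left (hT.doublyIrreducible_of_mem ha)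

theorem right_notMem {a b : α} (h : DecorationSite a b) : b ∉ T :=
  fun hb => h.not_doublyIrreducible_right (hT.doublyIrreducible_of_mem hb)

theorem two_le_ncard_covBy_diff [Finite α] {a b : α} (h : DecorationSite a b) :
    2 ≤ ({x | a ⋖ x} \ T).ncard := by
  have hremoved : ({x | a ⋖ x} ∩ T).ncard ≤ {x | a ⋖ x}.ncard - 2 := by
    calc ({x | a ⋖ x} ∩ T).ncard ≤ (T ∩ siteTrinkets a b).ncard := by
          refine Set.ncard_le_ncard fun x ⟨hax, hxT⟩ =>
            ⟨hxT, hT.doublyIrreducible_of_mem hxT, hax.lt, (h.covBy_iff_s5.mp hax).lt⟩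
      _ = min (siteTrinkets a b).ncard ({x | a ⋖ x}.ncard - 2) := hT.1 a b h
      _ ≤ {x | a ⋖ x}.ncard - 2 := min_le_right _ _
  have := Set.ncard_inter_add_ncard_sdiff_eq_ncard {x | a ⋖ x} T
  have := h.2
  omega

theorem exists_covBy_notMem [Finite α] {a b : α} (h : DecorationSite a b) :
    ∃ c ∉ T, a ⋖ c := by
  obtain ⟨c, hac, hcT⟩ :=
    Set.nonempty_of_ncard_ne_zero (by linarith [hT.two_le_ncard_covBy_diff h])
  exact ⟨c, hcT, hac⟩

variable {S : Sublattice α} (hS : (S : Set α) = Tᶜ)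
include hS

theorem coe_covBy_coe_iff [Finite α] {x y : S} : (x : α) ⋖ y ↔ x ⋖ y := by
  refine ⟨CovBy.of_image (OrderEmbedding.subtype (· ∈ S)),
    fun hxy => ⟨hxy.lt, fun z hxz hzy => ?_⟩⟩
  have mem (x : α) : x ∈ S ↔ x ∉ T := Set.ext_iff.mp hS x
  have hzT : z ∈ T := by
    by_contra hzT
    exact hxy.2 (show x < ⟨z, (mem z).mpr hzT⟩ from hxz) hzy
  obtain ⟨a, b, h, hlow, hup⟩ := hT.exists_decorationSite_of_mem hzT
  let a' : S := ⟨a, (mem _).mpr (hT.left_notMem h)⟩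
  let b' : S := ⟨b, (mem _).mpr (hT.right_notMem h)⟩
  have hxa : x ≤ a' := by
    obtain ⟨c, hxc, hcz⟩ := exists_le_covBy_of_lt hxz
    exact ((hlow c).mp hcz ▸ hxc :)
  have hby : b' ≤ y := by
    obtain ⟨c, hzc, hcy⟩ := exists_covBy_le_of_lt hzy
    exact ((hup c).mp hzc ▸ hcy :)
  have hab : a' < b' := ((hlow a).mpr rfl).lt.trans ((hup b).mpr rfl).lt
  obtain rfl : x = a' := hxa.eq_of_not_lt fun hxa => hxy.2 hxa (hab.trans_le hby)
  obtain rfl : b' = y := hby.eq_of_not_lt fun hby => hxy.2 (hxa.trans_lt hab) hby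
  obtain ⟨c, hcT, hac⟩ := hT.exists_covBy_notMem h
  exact hxy.2 (show a' < ⟨c, (mem c).mpr hcT⟩ from hac.lt) (h.covBy_iff_s5.mp hac).lt

theorem ncard_setOf_covBy [Finite α] (a : S) :
    {x : S | a ⋖ x}.ncard = ({x | (a : α) ⋖ x} \ T).ncard := by
  have : {x : S | a ⋖ x} = Subtype.val ⁻¹' {x | (a : α) ⋖ x} :=
    Set.ext fun x => (hT.coe_covBy_coe_iff hS).symm
  rw [this, ← Set.ncard_image_of_injective _ Subtype.val_injective,
    Set.image_preimage_eq_inter_range, Subtype.range_coe_subtype]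
  congr 1
  ext x
  exact and_congr_right fun _ => Set.ext_iff.mp hS x

theorem decorationSite_of_coe [Finite α] {a b : S} (h : DecorationSite (a : α) b) :
    DecorationSite a b :=
  ⟨Set.ext fun _ => (hT.coe_covBy_coe_iff hS).symm.trans
      (h.covBy_iff_s5.trans (hT.coe_covBy_coe_iff hS)),
    hT.ncard_setOf_covBy hS a ▸ hT.two_le_ncard_covBy_diff h⟩

theorem coe_decorationSite [Finite α] {a b : S} (h : DecorationSite a b) :
    DecorationSite (a : α) b := by
  have mem (x : α) : x ∈ S ↔ x ∉ T := Set.ext_iff.mp hS x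
  refine ⟨Set.ext fun x => ?_, ?_⟩
  · show (a : α) ⋖ x ↔ x ⋖ b
    by_cases hxT : x ∈ T
    · obtain ⟨a', b', h', hlow, hup⟩ := hT.exists_decorationSite_of_mem hxT
      have h'S : DecorationSite (⟨a', (mem a').mpr (hT.left_notMem h')⟩ : S)
          ⟨b', (mem b').mpr (hT.right_notMem h')⟩ :=
        hT.decorationSite_of_coe hS h'
      rw [hlow, hup]
      constructor
      · rintro rfl
        exact congrArg Subtype.val (h.right_unique h'S)
      · rintro rfl
        exact congrArg Subtype.val (h.left_unique h'S)
    · exact (hT.coe_covBy_coe_iff hS (y := ⟨x, (mem x).mpr hxT⟩)).trans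
        (h.covBy_iff_s5.trans (hT.coe_covBy_coe_iff hS).symm)
  · calc 2 ≤ {x : S | a ⋖ x}.ncard := h.2
      _ = ({x | (a : α) ⋖ x} \ T).ncard := hT.ncard_setOf_covBy hS a
      _ ≤ {x | (a : α) ⋖ x}.ncard := Set.ncard_le_ncard Set.sdiff_subset

end TrinketRemovalSet

theorem stmt_5_general {α : Type*} [Lattice α] [Finite α] (T : Set α)
    (hT : TrinketRemovalSet T) (S : Sublattice α) (hS : (S : Set α) = Tᶜ) :
    (∀ a b : ↥S, DecorationSite a b ↔ DecorationSite (a : α) (b : α)) ∧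
    (∀ a b : α, DecorationSite a b → a ∈ S ∧ b ∈ S) :=
  ⟨fun _ _ => ⟨hT.coe_decorationSite hS, hT.decorationSite_of_coe hS⟩,
    fun a b h => ⟨(Set.ext_iff.mp hS a).mpr (hT.left_notMem h),
      (Set.ext_iff.mp hS b).mpr (hT.right_notMem h)⟩⟩

/-- Removing a trinket-removal set does not change the decoration sites: a pair
of surviving elements is a decoration site of the induced lattice `R` iff it is
one of `L`, and both corners of every decoration site of `L` survive. -/
theorem stmt_5 {α : Type*} [Lattice α] [Finite α] [Nonempty α] (T : Set α)
    (hT : TrinketRemovalSet T) (S : Sublattice α) (hS : (S : Set α) = Tᶜ) :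
    (∀ a b : ↥S, DecorationSite a b ↔ DecorationSite (a : α) (b : α)) ∧
    (∀ a b : α, DecorationSite a b → a ∈ S ∧ b ∈ S) :=
  stmt_5_general T hT S hS
end

section
/- Let L be a finite lattice, let (a,b) be a decoration site of L, and let t and t′ be two distinct doubly irreducible elements with a < t < b and a < t′ < b. Then the map L → L that exchanges t and t′ and fixes every other element is a lattice automorphism of L. -/
/-! A doubly irreducible `t` with `a < t < b` at a decoration site must cover `a`: a cover of `a`
strictly below the lower cover of `t` would be a lower cover of `b` lying below `t < b`. Then
`t ⋖ b` as well, so the elements below `t` are those `≤ a` and the elements above `t` are those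
`≥ b`. Two such elements have the same strict lower and upper sets, and exchanging two elements with
the same strict lower and upper sets is an order automorphism. -/

section CoverUniqueness

variable {α : Type*} [PartialOrder α] {l t u x : α}

theorem CovBy.lt_iff_le_of_forall_covBy_eq [IsStronglyCoatomic α] (hl : l ⋖ t)
    (huniq : ∀ c, c ⋖ t → c = l) : x < t ↔ x ≤ l := by
  refine ⟨fun hxt => ?_, fun hxl => hxl.trans_lt hl.lt⟩
  obtain ⟨c, hxc, hct⟩ := exists_le_covBy_of_lt hxt
  exact huniq c hct ▸ hxc

theorem CovBy.lt_iff_le_of_forall_covBy_eq' [IsStronglyAtomic α] (hu : t ⋖ u)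
    (huniq : ∀ c, t ⋖ c → c = u) : t < x ↔ u ≤ x :=
  CovBy.lt_iff_le_of_forall_covBy_eq (α := αᵒᵈ) hu.toDual fun c hc => huniq c hc.ofDual

end CoverUniqueness

section SwapOrderIso

variable {α : Type*} [DecidableEq α] {t t' : α}

theorem Equiv.swap_lt_swap_iff [Preorder α] (hlow : ∀ x, x < t ↔ x < t')
    (hup : ∀ x, t < x ↔ t' < x) {x y : α} : swap t t' x < swap t t' y ↔ x < y := by
  have hnot : ¬ t < t' ∧ ¬ t' < t :=
    ⟨fun h => lt_irrefl t ((hlow t).2 h), fun h => lt_irrefl t' ((hlow t').1 h)⟩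
  simp only [swap_apply_def]
  split_ifs <;> simp_all

def Equiv.swapOrderIso [PartialOrder α] (hlow : ∀ x, x < t ↔ x < t')
    (hup : ∀ x, t < x ↔ t' < x) : α ≃o α where
  toEquiv := swap t t'
  map_rel_iff' {x y} := by
    simp only [le_iff_lt_or_eq, swap_lt_swap_iff hlow hup, (swap t t').injective.eq_iff]

end SwapOrderIso

namespace DoublyIrreducible

variable {α : Type*} [Lattice α] {a b t x : α}

theorem lt_iff_le_of_covBy [IsStronglyCoatomic α] (ht : DoublyIrreducible t) (hat : a ⋖ t) :
    x < t ↔ x ≤ a :=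
  CovBy.lt_iff_le_of_forall_covBy_eq hat fun _ hc => ht.2.unique hc hat

theorem lt_iff_le_of_covBy' [IsStronglyAtomic α] (ht : DoublyIrreducible t) (htb : t ⋖ b) :
    t < x ↔ b ≤ x :=
  CovBy.lt_iff_le_of_forall_covBy_eq' htb fun _ hc => ht.1.unique hc htb

theorem covBy_and_covBy_of_lt_of_lt [IsStronglyAtomic α] [IsStronglyCoatomic α]
    (hcov : {x | a ⋖ x} = {x | x ⋖ b}) (ht : DoublyIrreducible t) (hat : a < t) (htb : t < b) :
    a ⋖ t ∧ t ⋖ b := by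
  obtain ⟨l, hlt, hl⟩ := ht.2
  have hal_le : a ≤ l := (CovBy.lt_iff_le_of_forall_covBy_eq hlt hl).1 hat
  have hal : a = l := by
    by_contra hne
    obtain ⟨d, had, hdl⟩ := exists_covBy_le_of_lt (hal_le.lt_of_ne hne)
    have hdb : d ∈ {x | x ⋖ b} := hcov ▸ had
    exact hdb.2 (hdl.trans_lt hlt.lt) htb
  subst hal
  exact ⟨hlt, show t ∈ {x | x ⋖ b} from hcov ▸ hlt⟩

end DoublyIrreducible

theorem stmt_7_general {α : Type*} [Lattice α] [Finite α] [DecidableEq α]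
    {a b t t' : α} (hab : DecorationSite a b)
    (ht : DoublyIrreducible t) (ht' : DoublyIrreducible t')
    (h1 : a < t) (h2 : t < b) (h1' : a < t') (h2' : t' < b) :
    (∀ x y : α, Equiv.swap t t' (x ⊔ y) = Equiv.swap t t' x ⊔ Equiv.swap t t' y) ∧
    (∀ x y : α, Equiv.swap t t' (x ⊓ y) = Equiv.swap t t' x ⊓ Equiv.swap t t' y) := by
  obtain ⟨hat, htb⟩ := ht.covBy_and_covBy_of_lt_of_lt hab.1 h1 h2
  obtain ⟨hat', ht'b⟩ := ht'.covBy_and_covBy_of_lt_of_lt hab.1 h1' h2'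
  let e := Equiv.swapOrderIso
    (fun _ => (ht.lt_iff_le_of_covBy hat).trans (ht'.lt_iff_le_of_covBy hat').symm)
    (fun _ => (ht.lt_iff_le_of_covBy' htb).trans (ht'.lt_iff_le_of_covBy' ht'b).symm)
  exact ⟨fun x y => e.map_sup x y, fun x y => e.map_inf x y⟩

/-- Exchanging two distinct doubly irreducible elements strictly between the
corners of a decoration site, while fixing every other element, is a lattice
automorphism (the swap is a bijection preserving joins and meets). -/
theorem stmt_7 {α : Type*} [Lattice α] [Finite α] [Nonempty α] [DecidableEq α]
    {a b t t' : α} (hab : DecorationSite a b)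
    (ht : DoublyIrreducible t) (ht' : DoublyIrreducible t') (htt' : t ≠ t')
    (h1 : a < t) (h2 : t < b) (h1' : a < t') (h2' : t' < b) :
    (∀ x y : α, Equiv.swap t t' (x ⊔ y) = Equiv.swap t t' x ⊔ Equiv.swap t t' y) ∧
    (∀ x y : α, Equiv.swap t t' (x ⊓ y) = Equiv.swap t t' x ⊓ Equiv.swap t t' y) :=
  stmt_7_general hab ht ht' h1 h2 h1' h2'
end

section
/- Let L be a finite lattice and let T and T′ be two trinket-removal sets of L. Then the induced lattices on L \ T and L \ T′ are isomorphic as lattices. (Hence the rack of an unlabeled lattice is well defined.) -/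
section Helpers

variable {α : Type*} [Lattice α] [Finite α]

lemma trinket_facts {a b x : α} (hab : DecorationSite a b) (hx : x ∈ siteTrinkets a b) :
    (∀ y, y ⋖ x → y = a) ∧ (∀ y, x ⋖ y → y = b) ∧
    (∀ y, y ≤ x ↔ y = x ∨ y ≤ a) ∧ (∀ y, x ≤ y ↔ y = x ∨ b ≤ y) := by
  obtain ⟨hdi, hax, hxb⟩ := hx
  obtain ⟨c, hc, hcx⟩ := exists_covBy_le_of_lt hax
  have hcb : c ⋖ b := by
    have := hab.1
    rw [Set.ext_iff] at this
    exact (this c).1 hc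
  have hceq : c = x := by
    by_contra hne
    exact hcb.2 (lt_of_le_of_ne hcx hne) hxb
  subst hceq
  obtain ⟨⟨u, hu, huu⟩, ⟨l, hl, hll⟩⟩ := hdi
  have hlow : ∀ y, y ⋖ c → y = a := fun y hy => (hll y hy).trans (hll a hc).symm
  have hup : ∀ y, c ⋖ y → y = b := fun y hy => (huu y hy).trans (huu b hcb).symm
  refine ⟨hlow, hup, fun y => ?_, fun y => ?_⟩
  · constructor
    · intro hyc
      rcases eq_or_lt_of_le hyc with rfl | hlt
      · exact Or.inl rfl
      · obtain ⟨z, hyz, hzc⟩ := exists_le_covBy_of_lt hlt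
        exact Or.inr (hlow z hzc ▸ hyz)
    · rintro (rfl | hya)
      · exact le_rfl
      · exact hya.trans hax.le
  · constructor
    · intro hcy
      rcases eq_or_lt_of_le hcy with h | hlt
      · exact Or.inl h.symm
      · obtain ⟨z, hcz, hzy⟩ := exists_covBy_le_of_lt hlt
        exact Or.inr (hup z hcz ▸ hzy)
    · rintro (rfl | hby)
      · exact le_rfl
      · exact hxb.le.trans hby

lemma trinket_covs {a b x : α} (hab : DecorationSite a b) (hx : x ∈ siteTrinkets a b) :
    a ⋖ x ∧ x ⋖ b := by
  obtain ⟨hlow, hup, hle, hge⟩ := trinket_facts hab hx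
  obtain ⟨hdi, hax, hxb⟩ := hx
  obtain ⟨z, hz, hzx⟩ := exists_le_covBy_of_lt hax
  obtain ⟨w, hxw, hwb⟩ := exists_covBy_le_of_lt hxb
  rw [hlow z hzx] at hzx
  rw [hup w hxw] at hxw
  exact ⟨hzx, hxw⟩

lemma site_unique {a b c d x : α} (hab : DecorationSite a b) (hcd : DecorationSite c d)
    (hx : x ∈ siteTrinkets a b) (hx' : x ∈ siteTrinkets c d) : c = a ∧ d = b := by
  obtain ⟨hlow, hup, -, -⟩ := trinket_facts hab hx
  obtain ⟨hcx, hxd⟩ := trinket_covs hcd hx'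
  exact ⟨hlow c hcx, hup d hxd⟩

lemma swap_mono [DecidableEq α] {a b t t' : α} (hab : DecorationSite a b)
    (ht : t ∈ siteTrinkets a b) (ht' : t' ∈ siteTrinkets a b) :
    ∀ {y z : α}, y ≤ z → Equiv.swap t t' y ≤ Equiv.swap t t' z := by
  obtain ⟨-, -, htle, htge⟩ := trinket_facts hab ht
  obtain ⟨-, -, ht'le, ht'ge⟩ := trinket_facts hab ht'
  have hat : a < t := ht.2.1
  have htb : t < b := ht.2.2
  have hat' : a < t' := ht'.2.1
  have ht'b : t' < b := ht'.2.2
  intro y z h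
  rcases eq_or_ne y t with hy | hyt
  · subst hy
    rw [Equiv.swap_apply_left]
    rcases eq_or_ne z y with hz | hzy
    · subst hz
      rw [Equiv.swap_apply_left]
    rcases eq_or_ne z t' with hz | hzt'
    · subst hz
      rw [Equiv.swap_apply_right]
      rcases (htge z).1 h with h1 | h1
      · exact absurd h1 hzy
      · exact absurd h1 (not_le_of_gt ht'b)
    · rw [Equiv.swap_apply_of_ne_of_ne hzy hzt']
      rcases (htge z).1 h with h1 | h1
      · exact absurd h1 hzy
      · exact ht'b.le.trans h1
  rcases eq_or_ne y t' with hy | hyt'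
  · subst hy
    rw [Equiv.swap_apply_right]
    rcases eq_or_ne z y with hz | hzy
    · subst hz
      rw [Equiv.swap_apply_right]
    rcases eq_or_ne z t with hz | hzt
    · subst hz
      rw [Equiv.swap_apply_left]
      rcases (ht'ge z).1 h with h1 | h1
      · exact absurd h1 hzy
      · exact absurd h1 (not_le_of_gt htb)
    · rw [Equiv.swap_apply_of_ne_of_ne hzt hzy]
      rcases (ht'ge z).1 h with h1 | h1
      · exact absurd h1 hzy
      · exact htb.le.trans h1
  · rw [Equiv.swap_apply_of_ne_of_ne hyt hyt']
    rcases eq_or_ne z t with hz | hzt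
    · subst hz
      rw [Equiv.swap_apply_left]
      rcases (htle y).1 h with h1 | h1
      · exact absurd h1 hyt
      · exact h1.trans hat'.le
    rcases eq_or_ne z t' with hz | hzt'
    · subst hz
      rw [Equiv.swap_apply_right]
      rcases (ht'le y).1 h with h1 | h1
      · exact absurd h1 hyt'
      · exact h1.trans hat.le
    · rw [Equiv.swap_apply_of_ne_of_ne hzt hzt']
      exact h

end Helpers

section Helpers2

variable {α : Type*} [Lattice α] [Finite α]

def swapIso [DecidableEq α] {a b t t' : α} (hab : DecorationSite a b)
    (ht : t ∈ siteTrinkets a b) (ht' : t' ∈ siteTrinkets a b) : α ≃o α :=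
  { toEquiv := Equiv.swap t t'
    map_rel_iff' := by
      intro y z
      constructor
      · intro h
        have := swap_mono hab ht ht' h
        simpa using this
      · exact fun h => swap_mono hab ht ht' h }

lemma swapIso_coe' {a b t t' : α} [DecidableEq α] (hab : DecorationSite a b)
    (ht : t ∈ siteTrinkets a b) (ht' : t' ∈ siteTrinkets a b) :
    (swapIso hab ht ht' : α → α) = Equiv.swap t t' := rfl

lemma swap_image {t t' : α} [DecidableEq α] {T : Set α} (ht : t ∈ T) (ht' : t' ∉ T) :
    Equiv.swap t t' '' T = insert t' (T \ {t}) := by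
  ext x
  simp only [Set.mem_image, Set.mem_insert_iff, Set.mem_diff, Set.mem_singleton_iff]
  constructor
  · rintro ⟨y, hy, rfl⟩
    rcases eq_or_ne y t with rfl | hyt
    · left; exact Equiv.swap_apply_left _ _
    have hyt' : y ≠ t' := fun h => ht' (h ▸ hy)
    right
    rw [Equiv.swap_apply_of_ne_of_ne hyt hyt']
    exact ⟨hy, hyt⟩
  · rintro (rfl | ⟨hx, hxt⟩)
    · exact ⟨t, ht, Equiv.swap_apply_left _ _⟩
    · have hxt' : x ≠ t' := fun h => ht' (h ▸ hx)
      exact ⟨x, hx, Equiv.swap_apply_of_ne_of_ne hxt hxt'⟩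

/-- Restrict an order automorphism to an order isomorphism between a set and its image. -/
def OrderIso.restrictSet (e : α ≃o α) {s u : Set α} (h : e '' s = u) : s ≃o u where
  toFun x := ⟨e x, h ▸ Set.mem_image_of_mem e x.2⟩
  invFun x := ⟨e.symm x, by
    have hx : (x : α) ∈ e '' s := h ▸ x.2
    obtain ⟨y, hy, hyx⟩ := hx
    have : e.symm x = y := by rw [← hyx]; simp
    rw [this]; exact hy⟩
  left_inv x := by ext; simp
  right_inv x := by ext; simp
  map_rel_iff' := by
    intro x y
    exact e.le_iff_le

end Helpers2

section Key

variable {α : Type*} [Lattice α] [Finite α]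

lemma key (T' : Set α) (hT' : TrinketRemovalSet T') :
    ∀ n, ∀ T : Set α, TrinketRemovalSet T → (T \ T').ncard = n →
      Nonempty ((Tᶜ : Set α) ≃o (T'ᶜ : Set α)) := by
  classical
  intro n
  induction n with
  | zero =>
    intro T hT h0
    have hsub : T ⊆ T' := by
      rw [Set.ncard_eq_zero (Set.toFinite _)] at h0
      exact Set.diff_eq_empty.mp h0
    have hsub' : T' ⊆ T := by
      intro t' ht'
      by_contra htn
      obtain ⟨a, b, hab, hsite⟩ := hT'.2 t' ht'
      have hA : (T ∩ siteTrinkets a b) ⊆ (T' ∩ siteTrinkets a b) :=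
        Set.inter_subset_inter_left _ hsub
      have hcard : (T ∩ siteTrinkets a b).ncard = (T' ∩ siteTrinkets a b).ncard :=
        (hT.1 a b hab).trans (hT'.1 a b hab).symm
      have heq := Set.eq_of_subset_of_ncard_le hA (le_of_eq hcard.symm) (Set.toFinite _)
      have : t' ∈ T ∩ siteTrinkets a b := heq ▸ ⟨ht', hsite⟩
      exact htn this.1
    have : T = T' := le_antisymm hsub hsub'
    subst this
    exact ⟨OrderIso.refl _⟩
  | succ n ih =>
    intro T hT hcard
    have hne : (T \ T').Nonempty := Set.nonempty_of_ncard_ne_zero (by omega)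
    obtain ⟨t, htT, htT'⟩ := hne
    obtain ⟨a, b, hab, hts⟩ := hT.2 t htT
    have hcardAB : (T ∩ siteTrinkets a b).ncard = (T' ∩ siteTrinkets a b).ncard :=
      (hT.1 a b hab).trans (hT'.1 a b hab).symm
    have htA : t ∈ T ∩ siteTrinkets a b := ⟨htT, hts⟩
    have hex : ∃ t', t' ∈ (T' ∩ siteTrinkets a b) \ (T ∩ siteTrinkets a b) := by
      by_contra hcon
      push_neg at hcon
      have hBA : (T' ∩ siteTrinkets a b) ⊆ (T ∩ siteTrinkets a b) \ {t} := by
        intro x hx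
        refine ⟨by_contra fun hxA => hcon x ⟨hx, hxA⟩, ?_⟩
        rintro rfl
        exact htT' hx.1
      have h1 := Set.ncard_le_ncard hBA (Set.toFinite _)
      have h2 := Set.ncard_diff_singleton_lt_of_mem htA (Set.toFinite _)
      omega
    obtain ⟨t', htB, htnA⟩ := hex
    have ht'T' : t' ∈ T' := htB.1
    have ht'site : t' ∈ siteTrinkets a b := htB.2
    have ht'T : t' ∉ T := fun h => htnA ⟨h, ht'site⟩
    have htne : t ≠ t' := by rintro rfl; exact ht'T htT
    set T₂ : Set α := insert t' (T \ {t}) with hT₂def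
    have hT₂site : ∀ c d, DecorationSite c d →
        T₂ ∩ siteTrinkets c d =
          if c = a ∧ d = b then insert t' ((T ∩ siteTrinkets a b) \ {t})
          else T ∩ siteTrinkets c d := by
      intro c d hcd
      by_cases hcda : c = a ∧ d = b
      · obtain ⟨rfl, rfl⟩ := hcda
        rw [if_pos ⟨rfl, rfl⟩]
        ext x
        simp only [hT₂def, Set.mem_inter_iff, Set.mem_insert_iff, Set.mem_diff,
          Set.mem_singleton_iff]
        constructor
        · rintro ⟨(rfl | ⟨hxT, hxt⟩), hxs⟩
          · exact Or.inl rfl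
          · exact Or.inr ⟨⟨hxT, hxs⟩, hxt⟩
        · rintro (rfl | ⟨⟨hxT, hxs⟩, hxt⟩)
          · exact ⟨Or.inl rfl, ht'site⟩
          · exact ⟨Or.inr ⟨hxT, hxt⟩, hxs⟩
      · rw [if_neg hcda]
        have htnot : t ∉ siteTrinkets c d := fun h => hcda (site_unique hab hcd hts h)
        have ht'not : t' ∉ siteTrinkets c d := fun h => hcda (site_unique hab hcd ht'site h)
        ext x
        simp only [hT₂def, Set.mem_inter_iff, Set.mem_insert_iff, Set.mem_diff,
          Set.mem_singleton_iff]
        constructor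
        · rintro ⟨(rfl | ⟨hxT, hxt⟩), hxs⟩
          · exact absurd hxs ht'not
          · exact ⟨hxT, hxs⟩
        · rintro ⟨hxT, hxs⟩
          have hxt : x ≠ t := by rintro rfl; exact htnot hxs
          exact ⟨Or.inr ⟨hxT, hxt⟩, hxs⟩
    have hT₂ : TrinketRemovalSet T₂ := by
      constructor
      · intro c d hcd
        rw [hT₂site c d hcd]
        by_cases hcda : c = a ∧ d = b
        · obtain ⟨rfl, rfl⟩ := hcda
          rw [if_pos ⟨rfl, rfl⟩]
          have ht'notmem : t' ∉ (T ∩ siteTrinkets c d) \ {t} := by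
            rintro ⟨h, -⟩; exact htnA h
          rw [Set.ncard_insert_of_notMem ht'notmem (Set.toFinite _),
            Set.ncard_diff_singleton_of_mem htA]
          have hpos : 0 < (T ∩ siteTrinkets c d).ncard :=
            (Set.ncard_pos (Set.toFinite _)).mpr ⟨t, htA⟩
          rw [← hT.1 c d hab]
          omega
        · rw [if_neg hcda]
          exact hT.1 c d hcd
      · intro x hx
        rcases hx with rfl | ⟨hxT, -⟩
        · exact ⟨a, b, hab, ht'site⟩
        · exact hT.2 x hxT
    have hT₂diff : T₂ \ T' = (T \ T') \ {t} := by
      ext x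
      simp only [hT₂def, Set.mem_diff, Set.mem_insert_iff, Set.mem_singleton_iff]
      constructor
      · rintro ⟨(rfl | ⟨hxT, hxt⟩), hxT'⟩
        · exact absurd ht'T' hxT'
        · exact ⟨⟨hxT, hxT'⟩, hxt⟩
      · rintro ⟨⟨hxT, hxT'⟩, hxt⟩
        exact ⟨Or.inr ⟨hxT, hxt⟩, hxT'⟩
    have hcard₂ : (T₂ \ T').ncard = n := by
      rw [hT₂diff, Set.ncard_diff_singleton_of_mem (show t ∈ T \ T' from ⟨htT, htT'⟩), hcard]
      omega
    obtain ⟨e₂⟩ := ih T₂ hT₂ hcard₂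
    have himg : swapIso hab hts ht'site '' (Tᶜ) = (T₂ᶜ : Set α) := by
      rw [swapIso_coe', Set.image_compl_eq (Equiv.swap t t').bijective, swap_image htT ht'T]
    exact ⟨((swapIso hab hts ht'site).restrictSet himg).trans e₂⟩

end Key


/-- Identify a sublattice with its underlying set, as an order isomorphism. -/
def sublatticeSetIso {α : Type*} [Lattice α] (S : Sublattice α) (s : Set α)
    (h : (S : Set α) = s) : ↥S ≃o ↥s where
  toFun x := ⟨x, (Set.ext_iff.mp h x).mp x.2⟩
  invFun x := ⟨x, (Set.ext_iff.mp h x).mpr x.2⟩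
  left_inv x := rfl
  right_inv x := rfl
  map_rel_iff' := Iff.rfl

/-- Any two trinket-removal sets yield isomorphic induced lattices, so the rack
of an unlabeled lattice is well defined. -/
theorem stmt_8 {α : Type*} [Lattice α] [Finite α] [Nonempty α] (T T' : Set α)
    (hT : TrinketRemovalSet T) (hT' : TrinketRemovalSet T')
    (S S' : Sublattice α) (hS : (S : Set α) = Tᶜ) (hS' : (S' : Set α) = T'ᶜ) :
    Nonempty (↥S ≃o ↥S') := by
  obtain ⟨e⟩ := key T' hT' (T \ T').ncard T hT rfl
  exact ⟨((sublatticeSetIso S Tᶜ hS).trans e).trans (sublatticeSetIso S' T'ᶜ hS').symm⟩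
end

section
/- Every finite distributive lattice is a rack: in a finite distributive lattice, the lower corner of every decoration site has exactly two upper covers, so min(d, k−2) = 0 for every decoration site and the only trinket-removal set is the empty set. -/

private lemma cov_meet {α : Type*} [Lattice α] {a x z : α} (hax : a ⋖ x) (haz : a ⋖ z)
    (hxz : x ≠ z) : x ⊓ z = a := by
  rcases hax.eq_or_eq (le_inf hax.le haz.le) inf_le_left with h | h
  · exact h
  · exfalso
    have hle : x ≤ z := h ▸ inf_le_right
    rcases haz.eq_or_eq hax.le hle with h2 | h2
    · exact hax.lt.ne' h2
    · exact hxz h2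

/-- Every finite distributive lattice is a rack: the lower corner of every
decoration site has exactly two upper covers, so `min d (k - 2) = 0` for every
decoration site, and the only trinket-removal set is the empty set. -/
theorem stmt_15 {α : Type*} [Lattice α] [Finite α] [Nonempty α]
    (hdist : ∀ x y z : α, x ⊓ (y ⊔ z) = (x ⊓ y) ⊔ (x ⊓ z)) :
    (∀ a b : α, DecorationSite a b → {x | a ⋖ x}.ncard = 2) ∧
    IsRack α ∧
    (∀ T : Set α, TrinketRemovalSet T → T = ∅) := by
  have key : ∀ a b : α, DecorationSite a b → {x | a ⋖ x}.ncard = 2 := by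
    intro a b ⟨hset, hk⟩
    obtain ⟨x, y, hx, hy, hxy⟩ := Set.one_lt_ncard_iff (Set.toFinite _) |>.mp hk
    have hax : a ⋖ x := hx
    have hay : a ⋖ y := hy
    have hxb : x ⋖ b := by have := hset ▸ hx; exact this
    have hyb : y ⋖ b := by have := hset ▸ hy; exact this
    have hbeq : x ⊔ y = b := by
      rcases hxb.eq_or_eq le_sup_left (sup_le hxb.le hyb.le) with h | h
      · exfalso
        have hle : y ≤ x := by
          have : y ≤ x ⊔ y := le_sup_right
          exact h ▸ this
        rcases hax.eq_or_eq hay.le hle with h2 | h2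
        · exact hay.lt.ne' h2
        · exact hxy h2.symm
      · exact h
    have : {x | a ⋖ x} = {x, y} := by
      apply Set.eq_of_subset_of_subset
      · intro z hz
        by_contra hzz
        simp only [Set.mem_insert_iff, Set.mem_singleton_iff, not_or] at hzz
        have haz : a ⋖ z := hz
        have hzb : z ⋖ b := by have := hset ▸ hz; exact this
        have hza : z = a := by
          calc z = z ⊓ (x ⊔ y) := by rw [hbeq]; exact (inf_eq_left.mpr hzb.le).symm
          _ = (z ⊓ x) ⊔ (z ⊓ y) := hdist z x y
          _ = a := by
              rw [inf_comm z x, inf_comm z y, cov_meet hax haz (Ne.symm hzz.1),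
                cov_meet hay haz (Ne.symm hzz.2), sup_idem]
        exact haz.lt.ne' hza
      · intro z hz
        rcases hz with h | h
        · exact h ▸ hx
        · exact h ▸ hy
    rw [this, Set.ncard_pair hxy]
  refine ⟨key, ?_, ?_⟩
  · intro a b hab
    rw [key a b hab]
    simp
  · intro T hT
    by_contra hne
    obtain ⟨t, ht⟩ := Set.nonempty_iff_ne_empty.mpr hne
    obtain ⟨a, b, hab, htr⟩ := hT.2 t ht
    have h0 := hT.1 a b hab
    rw [key a b hab] at h0
    simp only [Nat.sub_self, Nat.min_zero] at h0
    have : (T ∩ siteTrinkets a b).Nonempty := ⟨t, ht, htr⟩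
    exact (Set.ncard_pos (Set.toFinite _) |>.mpr this).ne' h0
end
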